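/- Let G be a connected graph with at least 2 vertices, H any graph, and K an induced subgraph of G[H] whose projection π(K) to G has at least two vertices. Then π(K) is an isometric subgraph of G if and only if K is an isometric subgraph of G[H]. -/

import Mathlib

open SimpleGraph

variable {α β : Type*}

/-- The lexicographic product `G[H]`. -/
def lexProd (G : SimpleGraph α) (H : SimpleGraph β) : SimpleGraph (α × β) where
  Adj p q := G.Adj p.1 q.1 ∨ (p.1 = q.1 ∧ H.Adj p.2 q.2)
  symm := by
    constructor
    rintro ⟨u, x⟩ ⟨v, y⟩ (h | ⟨h1, h2⟩)
    · exact Or.inl h.symm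
    · exact Or.inr ⟨h1.symm, h2.symm⟩
  loopless := by
    constructor
    rintro ⟨u, x⟩ (h | ⟨-, h⟩)
    · exact G.loopless.irrefl u h
    · exact H.loopless.irrefl x h

/-- The induced subgraph on `S` is an isometric subgraph of `G`. -/
def IsometricSet (G : SimpleGraph α) (S : Set α) : Prop :=
  ∀ a b : S, (G.induce S).edist a b = G.edist a.1 b.1

/-- The set of orders of isometric (induced) subgraphs of `G`. -/
def dpSet (G : SimpleGraph α) : Set ℕ :=
  {k | ∃ S : Finset α, S.card = k ∧ IsometricSet G ↑S}

/-- `G` is distance preserving. -/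
def IsDP [Fintype α] (G : SimpleGraph α) : Prop :=
  G.Connected ∧ ∀ i : ℕ, 1 ≤ i → i ≤ Fintype.card α → i ∈ dpSet G

/-- `l` is an sdp sequence for `G`. -/
def IsSdpList [Fintype α] (G : SimpleGraph α) (l : List α) : Prop :=
  l.Nodup ∧ (∀ v : α, v ∈ l) ∧
    ∀ s : ℕ, IsometricSet G {v : α | v ∉ l.take s}

/-- `G` is sequentially distance preserving. -/
def IsSDP [Fintype α] (G : SimpleGraph α) : Prop :=
  G.Connected ∧ ∃ l : List α, IsSdpList G l

/-!
The first projection maps every edge of `G[H]`, and of `K`, to an edge or to a single vertex, and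
every walk of positive length in `G` (in `π(K)`) lifts to a walk of the same length between any
prescribed points of the end fibres. Hence two vertices in different fibres have, in `G[H]` and
in `K` alike, the distance of their projections. Two distinct vertices in one fibre are at
distance 1 or 2 in both graphs as soon as their first coordinate has a neighbour in `π(K)`, which
connectivity of `G` and isometry of `π(K)` provide.
-/

namespace SimpleGraph

variable {V W : Type*}

section Contraction

variable {G' : SimpleGraph V} {G : SimpleGraph W} {f : V → W}

lemma Walk.exists_length_le_of_adj_or_eq
    (hf : ∀ ⦃a b⦄, G'.Adj a b → f a = f b ∨ G.Adj (f a) (f b)) {p q : V} (w : G'.Walk p q) :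
    ∃ w' : G.Walk (f p) (f q), w'.length ≤ w.length := by
  induction w with
  | nil => exact ⟨.nil, le_rfl⟩
  | cons h _ ih =>
    obtain ⟨w', hw'⟩ := ih
    rcases hf h with heq | hadj
    · exact ⟨w'.copy heq.symm rfl, by simpa using hw'.trans (Nat.le_succ _)⟩
    · exact ⟨.cons hadj w', by simpa using hw'⟩

lemma edist_apply_le_of_adj_or_eq
    (hf : ∀ ⦃a b⦄, G'.Adj a b → f a = f b ∨ G.Adj (f a) (f b)) (p q : V) :
    G.edist (f p) (f q) ≤ G'.edist p q := by
  rcases eq_or_ne (G'.edist p q) ⊤ with h | h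
  · simp [h]
  obtain ⟨w, hw⟩ := exists_walk_of_edist_ne_top h
  obtain ⟨w', hl⟩ := w.exists_length_le_of_adj_or_eq hf
  calc G.edist (f p) (f q) ≤ w'.length := edist_le w'
    _ ≤ w.length := by exact_mod_cast hl
    _ = G'.edist p q := hw

lemma Walk.exists_lift_length_eq (hsurj : f.Surjective)
    (hlift : ∀ ⦃a b⦄, G.Adj (f a) (f b) → G'.Adj a b) {u v : W} (w : G.Walk u v) (hw : ¬ w.Nil)
    {p q : V} (hp : f p = u) (hq : f q = v) :
    ∃ w' : G'.Walk p q, w'.length = w.length := by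
  induction w generalizing p with
  | nil => exact absurd Walk.Nil.nil hw
  | @cons _ b _ h w ih =>
    subst hp
    by_cases hnil : w.Nil
    · obtain rfl := hnil.eq
      exact ⟨.cons (hlift (hq ▸ h)) .nil, by simp [Walk.length_eq_zero_iff.mpr hnil]⟩
    · obtain ⟨c, rfl⟩ := hsurj b
      obtain ⟨w', hl⟩ := ih hnil rfl hq
      exact ⟨.cons (hlift h) w', by simp [hl]⟩

lemma edist_le_edist_apply (hsurj : f.Surjective)
    (hlift : ∀ ⦃a b⦄, G.Adj (f a) (f b) → G'.Adj a b) {p q : V} (hpq : f p ≠ f q) :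
    G'.edist p q ≤ G.edist (f p) (f q) := by
  rcases eq_or_ne (G.edist (f p) (f q)) ⊤ with h | h
  · simp [h]
  obtain ⟨w, hw⟩ := exists_walk_of_edist_ne_top h
  obtain ⟨w', hl⟩ := w.exists_lift_length_eq hsurj hlift (w.not_nil_of_ne hpq) rfl rfl
  calc G'.edist p q ≤ w'.length := edist_le w'
    _ = w.length := by exact_mod_cast hl
    _ = G.edist (f p) (f q) := hw

lemma edist_eq_edist_apply (hf : ∀ ⦃a b⦄, G'.Adj a b → f a = f b ∨ G.Adj (f a) (f b))
    (hsurj : f.Surjective) (hlift : ∀ ⦃a b⦄, G.Adj (f a) (f b) → G'.Adj a b) {p q : V}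
    (hpq : f p ≠ f q) : G'.edist p q = G.edist (f p) (f q) :=
  (edist_le_edist_apply hsurj hlift hpq).antisymm (edist_apply_le_of_adj_or_eq hf p q)

end Contraction

lemma induce_edist_eq_of_adj_of_adj {G : SimpleGraph V} {s : Set V} {u v w : s}
    (huw : G.Adj u w) (hwv : G.Adj w v) : (G.induce s).edist u v = G.edist u v := by
  by_cases huv : u = v
  · subst huv
    simp
  by_cases hadj : G.Adj u v
  · rw [edist_eq_one_iff_adj.2 hadj, edist_eq_one_iff_adj.2 (induce_adj.2 hadj)]
  have hne : (u : V) ≠ v := Subtype.coe_injective.ne huv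
  rw [edist_eq_two_iff.2 ⟨huv, hadj, w, (mem_commonNeighbors _).2 ⟨huw, hwv.symm⟩⟩,
    edist_eq_two_iff.2 ⟨hne, hadj, w, (mem_commonNeighbors _).2 ⟨huw, hwv.symm⟩⟩]

end SimpleGraph

lemma IsometricSet.exists_adj_mem {V : Type*} {G : SimpleGraph V} {s : Set V}
    (hs : IsometricSet G s) (hG : G.Connected) (hnt : s.Nontrivial) {u : V} (hu : u ∈ s) :
    ∃ w ∈ s, G.Adj u w := by
  obtain ⟨u', hu', hne⟩ := hnt.exists_ne u
  have hreach : (G.induce s).Reachable ⟨u, hu⟩ ⟨u', hu'⟩ := by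
    rw [← edist_ne_top_iff_reachable, hs]
    exact edist_ne_top_iff_reachable.2 (hG.preconnected u u')
  obtain ⟨w⟩ := hreach
  exact ⟨_, w.snd.2, w.adj_snd (w.not_nil_of_ne (by simpa [Subtype.ext_iff] using hne.symm))⟩

section LexProd

variable {G : SimpleGraph α} {H : SimpleGraph β}

lemma lexProd_adj {p q : α × β} :
    (lexProd G H).Adj p q ↔ G.Adj p.1 q.1 ∨ p.1 = q.1 ∧ H.Adj p.2 q.2 :=
  .rfl

lemma lexProd_edist_of_fst_ne {p q : α × β} (hpq : p.1 ≠ q.1) :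
    (lexProd G H).edist p q = G.edist p.1 q.1 :=
  have : Nonempty β := ⟨p.2⟩
  edist_eq_edist_apply (fun _ _ h ↦ (lexProd_adj.1 h).elim Or.inr (Or.inl ·.1)) Prod.fst_surjective
    (fun _ _ h ↦ Or.inl h) hpq

lemma lexProd_induce_edist_of_fst_ne {S : Set (α × β)} {p q : S} (hpq : p.1.1 ≠ q.1.1) :
    ((lexProd G H).induce S).edist p q =
      (G.induce (Prod.fst '' S)).edist
        (Set.imageFactorization Prod.fst S p) (Set.imageFactorization Prod.fst S q) :=
  edist_eq_edist_apply (f := Set.imageFactorization Prod.fst S)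
    (fun _ _ h ↦ (lexProd_adj.1 h).elim Or.inr (Or.inl <| Subtype.ext ·.1))
    Set.imageFactorization_surjective (fun _ _ h ↦ Or.inl h) (hpq <| congrArg Subtype.val ·)

end LexProd

theorem stmt_2_general (G : SimpleGraph α) (H : SimpleGraph β)
    (hG : G.Connected) (S : Set (α × β)) (hproj : (Prod.fst '' S).Nontrivial) :
    IsometricSet G (Prod.fst '' S) ↔ IsometricSet (lexProd G H) S := by
  constructor
  · intro hT p q
    by_cases hpq : p.1.1 = q.1.1
    · obtain ⟨_, ⟨z, hz, rfl⟩, hadj⟩ := hT.exists_adj_mem hG hproj (Set.mem_image_of_mem _ p.2)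
      exact induce_edist_eq_of_adj_of_adj (w := ⟨z, hz⟩) (Or.inl hadj) (Or.inl (hpq ▸ hadj.symm))
    · rw [lexProd_induce_edist_of_fst_ne hpq, hT, lexProd_edist_of_fst_ne hpq]
      rfl
  · intro hS a b
    obtain ⟨p, rfl⟩ := Set.imageFactorization_surjective a
    obtain ⟨q, rfl⟩ := Set.imageFactorization_surjective b
    by_cases hpq : p.1.1 = q.1.1
    · rw [show Set.imageFactorization Prod.fst S p = Set.imageFactorization Prod.fst S q from
        Subtype.ext hpq]
      simp
    · rw [← lexProd_induce_edist_of_fst_ne hpq, hS, lexProd_edist_of_fst_ne hpq]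
      rfl

theorem stmt_2 (G : SimpleGraph α) (H : SimpleGraph β)
    (hG : G.Connected) [Fintype α] (hcard : 2 ≤ Fintype.card α)
    (S : Set (α × β)) (hproj : (Prod.fst '' S).Nontrivial) :
    IsometricSet G (Prod.fst '' S) ↔ IsometricSet (lexProd G H) S :=
  stmt_2_general G H hG S hproj
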